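/- The Jaco graph J_9(1) can be cleaned by the minimal brush allocation β(v_1) = 1, β(v_2) = 0, β(v_3) = 1, β(v_4) = 2, β(v_5) = 1, β(v_6) = 1, β(v_7) = 0, β(v_8) = 0, β(v_9) = 0; in particular b_r(J_9(1)) = 6. -/

import Mathlib

/-!
With the allocation `β`, cleaning `v_1, …, v_9` in index order succeeds. For the lower bound,
sum the cleaning condition over the set `S` of vertices cleaned before some time: every edge
inside `S` is counted once as a dirty edge at its earlier end and once as a received brush at its
later end, so at most `∑ β` edges leave `S`. Hence the brush number is at least the cutwidth, and
an exhaustive search over the orders in which the vertices of `J_9(1)` can be added one at a time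
(pruned as soon as a cut exceeds 5) shows that the cutwidth of `J_9(1)` exceeds 5.
-/

open Finset
open scoped Classical

/-! ## The cleaning model and brush numbers -/

variable {V : Type*}

/-- `π` is a cleaning sequence (an ordering of the vertices, given by an injective time
function) for the allocation `β` of brushes: every vertex, at the moment it cleans, holds at
least as many brushes (its initial brushes plus one brush received from each already-cleaned
neighbour) as it has dirty incident edges (edges to not-yet-cleaned neighbours), so it can send
one brush along each dirty incident edge. -/
def SimpleGraph.CleaningOrder [Fintype V] (G : SimpleGraph V) (β : V → ℕ) (π : V → ℕ) : Prop :=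
  Function.Injective π ∧
  ∀ v : V, (Finset.univ.filter fun u => G.Adj v u ∧ π v < π u).card ≤
    β v + (Finset.univ.filter fun u => G.Adj v u ∧ π u < π v).card

/-- The allocation `β` of brushes can clean the graph `G` (all edges start dirty, and
sequentially every vertex with at least as many brushes as dirty incident edges may clean,
sending one brush along each dirty incident edge). -/
def SimpleGraph.Cleans [Fintype V] (G : SimpleGraph V) (β : V → ℕ) : Prop :=
  ∃ π : V → ℕ, G.CleaningOrder β π

/-- The brush number of `G`: the minimum total number of brushes, over all initial
allocations, which allows all edges of `G` to be cleaned. -/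
noncomputable def SimpleGraph.brushNumber [Fintype V] (G : SimpleGraph V) : ℕ :=
  sInf {b : ℕ | ∃ β : V → ℕ, (∑ v, β v) = b ∧ G.Cleans β}

/-- The number of brushes located at vertex `v` at the end of the cleaning sequence `π`
with initial allocation `β`: `v` keeps its initial brushes, receives one from each neighbour
cleaned before it, and sends one to each neighbour cleaned after it. -/
noncomputable def SimpleGraph.finalBrushes [Fintype V] (G : SimpleGraph V)
    (β : V → ℕ) (π : V → ℕ) (v : V) : ℕ :=
  β v + (Finset.univ.filter fun u => G.Adj v u ∧ π u < π v).card
      - (Finset.univ.filter fun u => G.Adj v u ∧ π v < π u).card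

/-! ## Orientations -/

/-- An orientation of a simple graph `G`: each edge is given exactly one direction. -/
structure SimpleGraph.GraphOrientation (G : SimpleGraph V) where
  /-- the arc relation of the orientation -/
  arc : V → V → Prop
  adj_iff : ∀ u v, G.Adj u v ↔ (arc u v ∨ arc v u)
  asymm : ∀ u v, arc u v → ¬ arc v u

/-- Out-degree of a vertex under an orientation. -/
noncomputable def SimpleGraph.GraphOrientation.outDeg [Fintype V] {G : SimpleGraph V}
    (α : G.GraphOrientation) (v : V) : ℕ :=
  (Finset.univ.filter fun u => α.arc v u).card

/-- In-degree of a vertex under an orientation. -/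
noncomputable def SimpleGraph.GraphOrientation.inDeg [Fintype V] {G : SimpleGraph V}
    (α : G.GraphOrientation) (v : V) : ℕ :=
  (Finset.univ.filter fun u => α.arc u v).card

/-- `b_r^α(G)`: the minimum number of brushes needed to clean `G` when brushes may only
travel along out-arcs of the orientation `α` (so a vertex may clean only after all its
in-neighbours have cleaned, and then needs one brush for each out-arc), with value `∞` if
cleaning is impossible under `α`. -/
noncomputable def SimpleGraph.GraphOrientation.brushNumber [Fintype V] {G : SimpleGraph V}
    (α : G.GraphOrientation) : ℕ∞ :=
  sInf {c : ℕ∞ | ∃ (β : V → ℕ) (π : V → ℕ), Function.Injective π ∧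
    (∀ u v, α.arc u v → π u < π v) ∧
    (∀ v, α.outDeg v ≤ β v + α.inDeg v) ∧ c = (∑ v, β v : ℕ)}

/-! ## Brush centres -/

/-- `B` is a possible location set for a minimal brush allocation: the `b_r(G)` brushes can
be allocated to vertices of `B` so that `G` can be cleaned. -/
def SimpleGraph.CentreCandidate [Fintype V] (G : SimpleGraph V) (B : Finset V) : Prop :=
  ∃ β : V → ℕ, (∀ v, β v ≠ 0 → v ∈ B) ∧ (∑ v, β v) = G.brushNumber ∧ G.Cleans β

/-- The maximum distance between vertices of `B` in `G`. -/
noncomputable def SimpleGraph.centreSpread [Fintype V] (G : SimpleGraph V) (B : Finset V) : ℕ :=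
  B.sup fun v => B.sup fun u => G.dist v u

/-- `B` is a brush centre of `G`: a set of minimum cardinality to which the `b_r(G)` brushes
can be allocated so that `G` can be cleaned (primary condition), and which, among such sets of
minimum cardinality, minimizes the maximum distance between its vertices (secondary
condition). -/
def SimpleGraph.IsBrushCentre [Fintype V] (G : SimpleGraph V) (B : Finset V) : Prop :=
  G.CentreCandidate B ∧
  (∀ B' : Finset V, G.CentreCandidate B' → B.card ≤ B'.card) ∧
  (∀ B' : Finset V, G.CentreCandidate B' → B'.card = B.card →
    G.centreSpread B ≤ G.centreSpread B')

/-! ## Jaco graphs -/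

/-- The in-degree `d⁻(v_j)` of the vertex `v_j` in the infinite Jaco graph `J_∞(1)`:
`(v_i, v_j)` is an arc iff `1 ≤ i < j` and `2i - d⁻(v_i) ≥ j`. -/
noncomputable def jacoIn (j : ℕ) : ℕ :=
  Nat.strongRecOn j fun j ih =>
    ((Finset.range j).attach.filter fun i =>
      0 < i.1 ∧ j + ih i.1 (Finset.mem_range.mp i.2) ≤ 2 * i.1).card

/-- The arc relation of the infinite Jaco graph `J_∞(1)`: `(v_i, v_j)` is an arc iff
`1 ≤ i < j` and `2i - d⁻(v_i) ≥ j`. -/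
def jacoArc (i j : ℕ) : Prop := 0 < i ∧ i < j ∧ j + jacoIn i ≤ 2 * i

/-- The finite Jaco graph `J_n(1)` as a simple graph on `Fin n`;
vertex `k : Fin n` stands for `v_{k+1}`. -/
def jacoGraph (n : ℕ) : SimpleGraph (Fin n) where
  Adj a b := jacoArc ((a : ℕ) + 1) ((b : ℕ) + 1) ∨ jacoArc ((b : ℕ) + 1) ((a : ℕ) + 1)
  symm := ⟨by intro a b h; tauto⟩
  loopless := ⟨by intro a h; rcases h with h | h <;> exact absurd h.2.1 (lt_irrefl _)⟩

/-- The out-degree of `v_i` in the finite Jaco graph `J_n(1)` (under its defining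
orientation). -/
noncomputable def jacoOutDeg (n i : ℕ) : ℕ := ((Finset.Icc 1 n).filter fun j => jacoArc i j).card

/-- The in-degree of `v_j` in the finite Jaco graph `J_n(1)` (under its defining
orientation). -/
noncomputable def jacoInDeg (n j : ℕ) : ℕ := ((Finset.Icc 1 n).filter fun i => jacoArc i j).card

/-- The degree of `v_j` in the finite Jaco graph `J_n(1)`. -/
noncomputable def jacoDegree (n j : ℕ) : ℕ := jacoInDeg n j + jacoOutDeg n j

/-- The index `i` of the prime Jaconian vertex `v_i` of `J_n(1)`: the lowest-indexed vertex
attaining the maximum degree `Δ(J_n(1))`. -/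
noncomputable def primeJaconianIdx (n : ℕ) : ℕ :=
  sInf {i : ℕ | i ∈ Finset.Icc 1 n ∧ ∀ j ∈ Finset.Icc 1 n, jacoDegree n j ≤ jacoDegree n i}

/-! ## The Mycielskian -/

/-- The adjacency relation of the Mycielskian of `G`: `Sum.inl v` is the original vertex `v`,
`Sum.inr (Sum.inl v)` is its shadow `x_v`, and `Sum.inr (Sum.inr ())` is the apex `w`. -/
def mycAdj (G : SimpleGraph V) : V ⊕ V ⊕ Unit → V ⊕ V ⊕ Unit → Prop
  | Sum.inl u, Sum.inl v => G.Adj u v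
  | Sum.inl u, Sum.inr (Sum.inl v) => G.Adj u v
  | Sum.inr (Sum.inl u), Sum.inl v => G.Adj u v
  | Sum.inr (Sum.inl _), Sum.inr (Sum.inr _) => True
  | Sum.inr (Sum.inr _), Sum.inr (Sum.inl _) => True
  | _, _ => False

/-- The Mycielskian `μ(G)` of a simple graph `G`: vertex set `V(G) ∪ {x_v : v ∈ V(G)} ∪ {w}`,
with edges `uv` for `uv ∈ E(G)`, `u x_v` and `v x_u` for `uv ∈ E(G)`, and `w x_v` for all
`v ∈ V(G)`. -/
def mycielskian (G : SimpleGraph V) : SimpleGraph (V ⊕ V ⊕ Unit) where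
  Adj := mycAdj G
  symm := ⟨by
    rintro (u | u | u) (v | v | v) h <;> simp only [mycAdj] at h ⊢ <;> first
      | exact h.symm | exact h | trivial⟩
  loopless := ⟨by
    rintro (u | u | u) h <;> simp only [mycAdj] at h <;> exact G.loopless.irrefl _ h⟩

/-! ## Disjoint unions -/

/-- The disjoint union of an indexed family of simple graphs. -/
def sigmaGraph {ι : Type*} {W : ι → Type*} (G : ∀ i, SimpleGraph (W i)) :
    SimpleGraph (Σ i, W i) where
  Adj a b := ∃ (i : ι) (x y : W i), (G i).Adj x y ∧ a = ⟨i, x⟩ ∧ b = ⟨i, y⟩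
  symm := ⟨by rintro _ _ ⟨i, x, y, h, rfl, rfl⟩; exact ⟨i, y, x, h.symm, rfl, rfl⟩⟩
  loopless := ⟨by
    rintro _ ⟨i, x, y, h, rfl, he⟩
    obtain rfl : x = y := by simpa using he
    exact (G i).loopless.irrefl x h⟩

namespace SimpleGraph

variable [Fintype V] {G : SimpleGraph V}

theorem brushNumber_eq_of_cleans {β : V → ℕ} (hβ : G.Cleans β)
    (hmin : ∀ β' : V → ℕ, G.Cleans β' → ∑ v, β v ≤ ∑ v, β' v) :
    G.brushNumber = ∑ v, β v :=
  le_antisymm (Nat.sInf_le ⟨β, rfl, hβ⟩)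
    (le_csInf ⟨_, β, rfl, hβ⟩ fun _ ⟨β', hsum, hβ'⟩ => hsum ▸ hmin β' hβ')

section Cutwidth

variable [DecidableEq V] (G) [DecidableRel G.Adj]

def cutSize (S : Finset V) : ℕ := ∑ v ∈ S, #{u | G.Adj v u ∧ u ∉ S}

/-- `G.CutChain k (Fintype.card V) ∅` says that `G` has cutwidth at most `k`. -/
def CutChain (k : ℕ) : ℕ → Finset V → Prop
  | 0, S => S = univ
  | n + 1, S => ∃ v ∉ S, G.cutSize (insert v S) ≤ k ∧ CutChain k n (insert v S)

instance decidableCutChain (k : ℕ) : ∀ n S, Decidable (G.CutChain k n S)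
  | 0, S => inferInstanceAs (Decidable (S = univ))
  | n + 1, S =>
    haveI := fun T => decidableCutChain k n T
    inferInstanceAs (Decidable (∃ v ∉ S, G.cutSize (insert v S) ≤ k ∧ G.CutChain k n (insert v S)))

variable {G} {β π : V → ℕ}

theorem CleaningOrder.cutSize_le (h : G.CleaningOrder β π) (t : ℕ) :
    G.cutSize {v | π v < t} ≤ ∑ v, β v := by
  set S : Finset V := {v | π v < t} with hS
  have hclean : ∀ v, #{u | G.Adj v u ∧ π v < π u} ≤ β v + #{u | G.Adj v u ∧ π u < π v} := by
    intro v
    convert h.2 v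
  have later : ∀ v ∈ S, #{u | G.Adj v u ∧ π v < π u} =
      #{u | G.Adj v u ∧ u ∉ S} + #{u ∈ S | G.Adj v u ∧ π v < π u} := by
    intro v hv
    have hv : π v < t := by simpa [hS] using hv
    rw [← card_filter_add_card_filter_not (s := {u | G.Adj v u ∧ π v < π u}) (· ∉ S),
      filter_filter, filter_filter]
    congr 2 <;> ext u <;> simp only [hS, mem_filter, mem_univ, true_and] <;> grind
  have earlier : ∀ v ∈ S, #{u | G.Adj v u ∧ π u < π v} = #{u ∈ S | G.Adj v u ∧ π u < π v} := by
    intro v hv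
    have hv : π v < t := by simpa [hS] using hv
    congr 1; ext u; simp only [hS, mem_filter, mem_univ, true_and]; grind
  have inner : ∑ v ∈ S, #{u ∈ S | G.Adj v u ∧ π v < π u} =
      ∑ v ∈ S, #{u ∈ S | G.Adj v u ∧ π u < π v} := by
    simp only [card_filter]
    rw [sum_comm]
    refine sum_congr rfl fun u _ => sum_congr rfl fun v _ => if_congr ?_ rfl rfl
    rw [G.adj_comm]
  have summed := sum_le_sum fun v (hv : v ∈ S) => later v hv ▸ earlier v hv ▸ hclean v
  rw [sum_add_distrib, sum_add_distrib, inner] at summed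
  calc G.cutSize S ≤ ∑ v ∈ S, β v := by unfold cutSize; omega
    _ ≤ ∑ v, β v := sum_le_sum_of_subset (subset_univ S)

theorem CleaningOrder.cutChain (h : G.CleaningOrder β π) {k : ℕ} (hk : ∑ v, β v ≤ k)
    (n t : ℕ) (hcard : #{v | π v < t} + n = Fintype.card V) :
    G.CutChain k n {v | π v < t} := by
  induction n generalizing t with
  | zero => exact eq_univ_of_card _ hcard
  | succ n ih =>
    set S : Finset V := {v | π v < t} with hS
    have hne : (univ.filter (· ∉ S)).Nonempty := by
      by_contra hempty
      have hS_univ : S = univ := by simpa [filter_eq_empty_iff, eq_univ_iff_forall] using hempty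
      simp [hS_univ] at hcard
    obtain ⟨v, hvS, hmin⟩ := exists_min_image _ π hne
    have hvS : v ∉ S := (mem_filter.1 hvS).2
    have hinsert : insert v S = ({u | π u < π v + 1} : Finset V) := by
      ext u
      have hmin := hmin u
      have hinj := @h.1 u v
      simp only [hS, mem_insert, mem_filter, mem_univ, true_and, not_lt] at hvS hmin ⊢
      grind
    refine ⟨v, hvS, hinsert ▸ (h.cutSize_le _).trans hk, hinsert ▸ ih _ ?_⟩
    rw [← hinsert, card_insert_of_notMem hvS]
    omega

theorem Cleans.cutChain (h : G.Cleans β) {k : ℕ} (hk : ∑ v, β v ≤ k) :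
    G.CutChain k (Fintype.card V) ∅ := by
  obtain ⟨π, hπ⟩ := h
  simpa using hπ.cutChain hk (Fintype.card V) 0

end Cutwidth

end SimpleGraph

/-- The arcs `(v_{i+1}, v_{j+1})` of `J_9(1)`, listed as pairs `(i, j)`. -/
def jacoNineArcs : List (Fin 9 × Fin 9) :=
  [(0, 1), (1, 2), (2, 3), (2, 4), (3, 4), (3, 5), (3, 6), (4, 5), (4, 6), (4, 7), (5, 6), (5, 7),
    (5, 8), (6, 7), (6, 8), (7, 8)]

def jacoNine : SimpleGraph (Fin 9) := SimpleGraph.fromRel fun a b => (a, b) ∈ jacoNineArcs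

instance : DecidableRel jacoNine.Adj := fun a b =>
  inferInstanceAs (Decidable (a ≠ b ∧ ((a, b) ∈ jacoNineArcs ∨ (b, a) ∈ jacoNineArcs)))

theorem jacoGraph_nine_eq : jacoGraph 9 = jacoNine := by
  ext a b
  simp only [jacoGraph, jacoArc, jacoNine, SimpleGraph.fromRel_adj]
  revert a b
  decide +kernel

theorem jacoNine_cleans : jacoNine.Cleans ![1, 0, 1, 2, 1, 1, 0, 0, 0] := by
  refine ⟨Fin.val, Fin.val_injective, ?_⟩
  convert (by decide : ∀ v : Fin 9, #{u | jacoNine.Adj v u ∧ v.val < u.val} ≤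
    (![1, 0, 1, 2, 1, 1, 0, 0, 0] : Fin 9 → ℕ) v + #{u | jacoNine.Adj v u ∧ u.val < v.val})

theorem not_cutChain_jacoNine : ¬ jacoNine.CutChain 5 9 ∅ := by decide

theorem six_le_sum_of_cleans_jacoNine {β : Fin 9 → ℕ} (h : jacoNine.Cleans β) :
    6 ≤ ∑ v, β v := by
  by_contra! hlt
  exact not_cutChain_jacoNine (by simpa using h.cutChain (k := 5) (by omega))

/-- The Jaco graph `J_9(1)` can be cleaned by the minimal brush allocation
`β = (1, 0, 1, 2, 1, 1, 0, 0, 0)`; in particular `b_r(J_9(1)) = 6`. -/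
theorem brushNumber_jacoGraph_nine :
    (jacoGraph 9).Cleans ![1, 0, 1, 2, 1, 1, 0, 0, 0] ∧
    (∑ v, (![1, 0, 1, 2, 1, 1, 0, 0, 0] : Fin 9 → ℕ) v) = (jacoGraph 9).brushNumber ∧
    (jacoGraph 9).brushNumber = 6 := by
  have hsum : (∑ v, (![1, 0, 1, 2, 1, 1, 0, 0, 0] : Fin 9 → ℕ) v) = 6 := by decide
  have hbr : jacoNine.brushNumber = 6 := by
    rw [SimpleGraph.brushNumber_eq_of_cleans jacoNine_cleans fun _ h => by
      rw [hsum]; exact six_le_sum_of_cleans_jacoNine h, hsum]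
  rw [jacoGraph_nine_eq, hbr, hsum]
  exact ⟨jacoNine_cleans, rfl, rfl⟩
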